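/- Let p be a sub-critical unbounded pmf on ℕ with associated maximal-out-degree cdf H (satisfying H(n) = Σ_{m≤n} p_m H(n)^m, non-decreasing, H(n) → 1), and q_n = H(n) − H(n−1). Then for every fixed ℓ ∈ ℕ, lim_{n→∞} H(n)^{n−ℓ} = 1 and, along {n : p_n > 0}, lim_{n→∞} p_n·H(n)^{n−ℓ}/q_n = 1 − μ_p. -/

import Mathlib

/-!
Bernoulli's inequality `x ^ m ≥ 1 - m (1 - x)`, inserted into the fixed-point equation, gives
`(1 - H n) * (1 - μ) ≤ ∑_{k > n} p k`, hence `n * (1 - H n) ≤ (1 - μ)⁻¹ ∑_{k > n} k p k → 0`,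
and Bernoulli again gives `H n ^ (n - ℓ) → 1`. Subtracting the fixed-point equations at `n - 1`
and `n` gives `q n * (1 - S n) = p n * H n ^ n`, where `S n` is the slope of the truncated
generating function between `H (n - 1)` and `H n`; by dominated convergence `S n → μ`.
-/

open Filter Topology Finset

lemma one_sub_mul_le_pow {x : ℝ} (hx : 0 ≤ x) (m : ℕ) : 1 - m * (1 - x) ≤ x ^ m := by
  have h := one_add_mul_le_pow (a := x - 1) (by linarith) m
  rw [add_sub_cancel] at h
  linarith

lemma tendsto_pow_sub_of_tendsto_mul_one_sub {x : ℕ → ℝ} (hx0 : ∀ n, 0 ≤ x n)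
    (hx1 : ∀ n, x n ≤ 1) (h : Tendsto (fun n : ℕ => n * (1 - x n)) atTop (𝓝 0)) (ℓ : ℕ) :
    Tendsto (fun n => x n ^ (n - ℓ)) atTop (𝓝 1) := by
  have hlower : Tendsto (fun n : ℕ => 1 - n * (1 - x n)) atTop (𝓝 1) := by
    simpa using tendsto_const_nhds.sub h
  refine tendsto_of_tendsto_of_tendsto_of_le_of_le hlower tendsto_const_nhds (fun n => ?_)
    (fun n => pow_le_one₀ (hx0 n) (hx1 n))
  have hℓ : ((n - ℓ : ℕ) : ℝ) ≤ n := by exact_mod_cast n.sub_le ℓ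
  calc 1 - n * (1 - x n) ≤ 1 - ((n - ℓ : ℕ) : ℝ) * (1 - x n) := by
        gcongr; linarith [hx1 n]
    _ ≤ x n ^ (n - ℓ) := one_sub_mul_le_pow (hx0 n) _

lemma tendsto_sum_range_of_dominated {a : ℕ → ℕ → ℝ} {b c : ℕ → ℝ} (hb : Summable b)
    (hab : ∀ n m, ‖a n m‖ ≤ b m) (hac : ∀ m, Tendsto (a · m) atTop (𝓝 (c m))) :
    Tendsto (fun n => ∑ m ∈ range n, a n m) atTop (𝓝 (∑' m, c m)) := by
  have hind : ∀ n, ∑ m ∈ range n, a n m = ∑' m, (if m < n then a n m else 0) := fun n => by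
    rw [tsum_eq_sum (s := range n) fun m hm => if_neg (by simpa using hm)]
    exact sum_congr rfl fun m hm => (if_pos (mem_range.mp hm)).symm
  simp_rw [hind]
  refine tendsto_tsum_of_dominated_convergence hb (fun m => ?_) (.of_forall fun n m => ?_)
  · refine (hac m).congr' ?_
    filter_upwards [eventually_gt_atTop m] with n hn
    rw [if_pos hn]
  · split_ifs
    · exact hab n m
    · simpa using (norm_nonneg _).trans (hab n m)

lemma tendsto_nat_mul_tsum_nat_add {p : ℕ → ℝ} (hp : ∀ k, 0 ≤ p k)
    (hmean : Summable fun k : ℕ => (k : ℝ) * p k) :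
    Tendsto (fun n : ℕ => n * ∑' k, p (k + n)) atTop (𝓝 0) := by
  have hshift (n : ℕ) : Summable fun k : ℕ => ((k + n : ℕ) : ℝ) * p (k + n) :=
    (summable_nat_add_iff n).2 hmean
  have hle (n k : ℕ) : (n : ℝ) * p (k + n) ≤ ((k + n : ℕ) : ℝ) * p (k + n) := by
    gcongr
    · exact hp _
    · exact_mod_cast n.le_add_left k
  refine tendsto_of_tendsto_of_tendsto_of_le_of_le tendsto_const_nhds
    (tendsto_sum_nat_add fun k : ℕ => (k : ℝ) * p k) (fun n => ?_) (fun n => ?_)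
  · exact mul_nonneg n.cast_nonneg (tsum_nonneg fun k => hp _)
  · rw [← tsum_mul_left]
    have hsummable := (hshift n).of_nonneg_of_le (fun k => mul_nonneg n.cast_nonneg (hp _)) (hle n)
    exact hsummable.tsum_le_tsum (hle n) (hshift n)

lemma one_sub_mul_one_sub_tsum_le_tsum_nat_add {p : ℕ → ℝ} (hp : ∀ k, 0 ≤ p k)
    (hps : Summable p) (hsum : ∑' k, p k = 1) (hmean : Summable fun k : ℕ => (k : ℝ) * p k)
    {x : ℝ} (hx0 : 0 ≤ x) (hx1 : x ≤ 1) {N : ℕ} (hfix : x = ∑ m ∈ range N, p m * x ^ m) :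
    (1 - x) * (1 - ∑' k : ℕ, k * p k) ≤ ∑' k, p (k + N) := by
  have hsplit := hps.sum_add_tsum_nat_add N
  have hmeanN : ∑ m ∈ range N, (m : ℝ) * p m ≤ ∑' k : ℕ, k * p k :=
    hmean.sum_le_tsum _ fun k _ => mul_nonneg k.cast_nonneg (hp k)
  have hlow : ∑ m ∈ range N, p m - (1 - x) * ∑ m ∈ range N, (m : ℝ) * p m ≤ x := by
    calc ∑ m ∈ range N, p m - (1 - x) * ∑ m ∈ range N, (m : ℝ) * p m
        = ∑ m ∈ range N, p m * (1 - m * (1 - x)) := by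
          rw [mul_sum, ← sum_sub_distrib]
          exact sum_congr rfl fun m _ => by ring
      _ ≤ ∑ m ∈ range N, p m * x ^ m :=
          sum_le_sum fun m _ => mul_le_mul_of_nonneg_left (one_sub_mul_le_pow hx0 m) (hp m)
      _ = x := hfix.symm
  nlinarith

/-- The slope of the truncated generating function `s ↦ ∑_{m<N} p m s^m` between `y` and `x`,
written without division so that it stays meaningful at `x = y`. -/
def truncGFSlope (p : ℕ → ℝ) (N : ℕ) (x y : ℝ) : ℝ :=
  ∑ m ∈ range N, p m * ∑ j ∈ range m, x ^ j * y ^ (m - 1 - j)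

lemma sum_mul_pow_sub_sum_mul_pow (p : ℕ → ℝ) (N : ℕ) (x y : ℝ) :
    ∑ m ∈ range N, p m * x ^ m - ∑ m ∈ range N, p m * y ^ m = truncGFSlope p N x y * (x - y) := by
  rw [truncGFSlope, sum_mul, ← sum_sub_distrib]
  exact sum_congr rfl fun m _ => by rw [mul_assoc, geom_sum₂_mul]; ring

lemma sub_mul_one_sub_truncGFSlope {p : ℕ → ℝ} {N : ℕ} {x y : ℝ}
    (hx : x = ∑ m ∈ range (N + 1), p m * x ^ m) (hy : y = ∑ m ∈ range N, p m * y ^ m) :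
    (x - y) * (1 - truncGFSlope p N x y) = p N * x ^ N := by
  have := sum_mul_pow_sub_sum_mul_pow p N x y
  rw [sum_range_succ] at hx
  linear_combination hx - hy + this

lemma geom_sum₂_mem_Icc {x y : ℝ} (hx : x ∈ Set.Icc (0 : ℝ) 1) (hy : y ∈ Set.Icc (0 : ℝ) 1)
    (m : ℕ) : ∑ j ∈ range m, x ^ j * y ^ (m - 1 - j) ∈ Set.Icc (0 : ℝ) m := by
  refine ⟨sum_nonneg fun j _ => mul_nonneg (pow_nonneg hx.1 _) (pow_nonneg hy.1 _), ?_⟩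
  calc ∑ j ∈ range m, x ^ j * y ^ (m - 1 - j) ≤ ∑ _j ∈ range m, (1 : ℝ) :=
        sum_le_sum fun j _ =>
          mul_le_one₀ (pow_le_one₀ hx.1 hx.2) (pow_nonneg hy.1 _) (pow_le_one₀ hy.1 hy.2)
    _ = m := by simp

lemma tendsto_truncGFSlope {p : ℕ → ℝ} (hp : ∀ k, 0 ≤ p k)
    (hmean : Summable fun k : ℕ => (k : ℝ) * p k) {x y : ℕ → ℝ}
    (hx : ∀ n, x n ∈ Set.Icc (0 : ℝ) 1) (hy : ∀ n, y n ∈ Set.Icc (0 : ℝ) 1)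
    (hx1 : Tendsto x atTop (𝓝 1)) (hy1 : Tendsto y atTop (𝓝 1)) :
    Tendsto (fun n => truncGFSlope p n (x n) (y n)) atTop (𝓝 (∑' k : ℕ, k * p k)) := by
  refine tendsto_sum_range_of_dominated hmean (fun n m => ?_) (fun m => ?_)
  · have hσ := geom_sum₂_mem_Icc (hx n) (hy n) m
    rw [Real.norm_eq_abs, abs_of_nonneg (mul_nonneg (hp m) hσ.1), mul_comm (m : ℝ)]
    exact mul_le_mul_of_nonneg_left hσ.2 (hp m)
  · have hσ : Tendsto (fun n => ∑ j ∈ range m, x n ^ j * y n ^ (m - 1 - j)) atTop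
        (𝓝 (∑ _j ∈ range m, (1 : ℝ))) :=
      tendsto_finsetSum _ fun j _ => by simpa using (hx1.pow j).mul (hy1.pow (m - 1 - j))
    simpa [mul_comm (m : ℝ)] using hσ.const_mul (p m)

lemma tendsto_nat_mul_one_sub_of_fixedPoint {p : ℕ → ℝ} (hp : ∀ k, 0 ≤ p k) (hps : Summable p)
    (hsum : ∑' k, p k = 1) (hmeanS : Summable fun k : ℕ => (k : ℝ) * p k)
    (hmean : ∑' k : ℕ, (k : ℝ) * p k < 1) {H : ℕ → ℝ} (hH : ∀ n, H n ∈ Set.Icc (0 : ℝ) 1)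
    (hfix : ∀ n, H n = ∑ m ∈ range (n + 1), p m * H n ^ m) :
    Tendsto (fun n : ℕ => n * (1 - H n)) atTop (𝓝 0) := by
  set μ := ∑' k : ℕ, (k : ℝ) * p k
  have hμ : 0 < 1 - μ := by linarith
  have htail : Tendsto (fun n : ℕ => (n + 1 : ℕ) * (∑' k, p (k + (n + 1))) / (1 - μ))
      atTop (𝓝 0) := by
    simpa using
      ((tendsto_nat_mul_tsum_nat_add hp hmeanS).comp (tendsto_add_atTop_nat 1)).div_const _
  refine tendsto_of_tendsto_of_tendsto_of_le_of_le tendsto_const_nhds htail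
    (fun n => mul_nonneg n.cast_nonneg (by linarith [(hH n).2])) (fun n => ?_)
  have hbound := one_sub_mul_one_sub_tsum_le_tsum_nat_add hp hps hsum hmeanS (hH n).1 (hH n).2
    (hfix n)
  have htail_nonneg : 0 ≤ ∑' k, p (k + (n + 1)) := tsum_nonneg fun k => hp _
  rw [le_div_iff₀ hμ, mul_assoc]
  calc (n : ℝ) * ((1 - H n) * (1 - μ)) ≤ n * ∑' k, p (k + (n + 1)) := by gcongr
    _ ≤ (n + 1 : ℕ) * ∑' k, p (k + (n + 1)) := by gcongr; simp

lemma mul_pow_sub_div_sub_eq {x y c D : ℝ} {N ℓ : ℕ} (hx : 0 < x) (hc : 0 < c)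
    (hℓ : ℓ ≤ N) (h : (x - y) * (1 - D) = c * x ^ N) :
    c * x ^ (N - ℓ) / (x - y) = (1 - D) / x ^ ℓ := by
  have hxy : x - y ≠ 0 := by
    rintro hxy
    rw [hxy, zero_mul] at h
    exact (mul_pos hc (pow_pos hx N)).ne h
  rw [div_eq_div_iff hxy (pow_ne_zero ℓ hx.ne'), mul_assoc, ← pow_add, Nat.sub_add_cancel hℓ, ← h]
  ring

theorem forest_limit_general (p : ℕ → ℝ) (hp : ∀ k, 0 ≤ p k) (hsum : ∑' k, p k = 1)
    (hmeanS : Summable fun k : ℕ => (k : ℝ) * p k)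
    (hmean : ∑' k : ℕ, (k : ℝ) * p k < 1)
    (H : ℕ → ℝ) (hH : ∀ n, H n ∈ Set.Icc (0 : ℝ) 1)
    (hfix : ∀ n, H n = ∑ m ∈ Finset.range (n + 1), p m * H n ^ m)
    (hlim : Tendsto H atTop (𝓝 1)) (ℓ : ℕ) :
    Tendsto (fun n : ℕ => H n ^ (n - ℓ)) atTop (𝓝 1) ∧
      Tendsto (fun n : ℕ => p n * H n ^ (n - ℓ) / (H n - H (n - 1)))
        (atTop ⊓ Filter.principal {n : ℕ | 0 < p n})
        (𝓝 (1 - ∑' k : ℕ, (k : ℝ) * p k)) := by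
  have hps : Summable p := by
    by_contra h
    simp [tsum_eq_zero_of_not_summable h] at hsum
  refine ⟨tendsto_pow_sub_of_tendsto_mul_one_sub (fun n => (hH n).1) (fun n => (hH n).2)
    (tendsto_nat_mul_one_sub_of_fixedPoint hp hps hsum hmeanS hmean hH hfix) ℓ, ?_⟩
  have hslope := tendsto_truncGFSlope hp hmeanS hH (fun n => hH (n - 1)) hlim
    (hlim.comp (tendsto_sub_atTop_nat 1))
  have hratio : Tendsto (fun n => (1 - truncGFSlope p n (H n) (H (n - 1))) / H n ^ ℓ) atTop
      (𝓝 (1 - ∑' k : ℕ, (k : ℝ) * p k)) := by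
    have h := ((tendsto_const_nhds (x := (1 : ℝ))).sub hslope).div (hlim.pow ℓ) (by simp)
    rwa [one_pow, div_one] at h
  refine (hratio.mono_left inf_le_left).congr' ?_
  have hpos : ∀ᶠ n in atTop ⊓ 𝓟 {n | 0 < p n}, 0 < p n :=
    eventually_inf_principal.mpr (.of_forall fun n hn => hn)
  have hHpos : ∀ᶠ n in atTop, 0 < H n := hlim.eventually (eventually_gt_nhds one_pos)
  filter_upwards [hpos, (hHpos.and (eventually_gt_atTop ℓ)).filter_mono inf_le_left]
    with n hpn ⟨hHn, hℓn⟩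
  have hprev := hfix (n - 1)
  rw [Nat.sub_add_cancel (by omega)] at hprev
  exact (mul_pow_sub_div_sub_eq hHn hpn hℓn.le
    (sub_mul_one_sub_truncGFSlope (hfix n) hprev)).symm

/-- Key limit for the condensation-tree convergence (equation (1) of the paper):
for a sub-critical unbounded pmf `p` with maximal-out-degree cdf `H` and
`q n = H n − H (n−1)`, for every fixed `ℓ`, `H(n)^{n−ℓ} → 1` and
`p n · H(n)^{n−ℓ} / q n → 1 − μ_p` along `{n : p n > 0}`. -/
theorem forest_limit (p : ℕ → ℝ) (hp : ∀ k, 0 ≤ p k) (hsum : ∑' k, p k = 1)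
    (hmeanS : Summable fun k : ℕ => (k : ℝ) * p k)
    (hmean : ∑' k : ℕ, (k : ℝ) * p k < 1)
    (hunb : {n : ℕ | 0 < p n}.Infinite)
    (H : ℕ → ℝ) (hH : ∀ n, H n ∈ Set.Icc (0 : ℝ) 1) (hmono : Monotone H)
    (hfix : ∀ n, H n = ∑ m ∈ Finset.range (n + 1), p m * H n ^ m)
    (hlim : Tendsto H atTop (𝓝 1)) (ℓ : ℕ) :
    Tendsto (fun n : ℕ => H n ^ (n - ℓ)) atTop (𝓝 1) ∧
      Tendsto (fun n : ℕ => p n * H n ^ (n - ℓ) / (H n - H (n - 1)))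
        (atTop ⊓ Filter.principal {n : ℕ | 0 < p n})
        (𝓝 (1 - ∑' k : ℕ, (k : ℝ) * p k)) :=
  forest_limit_general p hp hsum hmeanS hmean H hH hfix hlim ℓ
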